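/- In the labelled Markov chain $\mathcal{M}_\oplus$ of $\mathsf{PCFL}_\oplus$ programs, the relation $(\mathcal{R}_\sigma)$ defined by $M\,\mathcal{R}_\sigma\,N$ iff $M,N$ are closed terms of type $\sigma$ with identical semantics $\llbracket M\rrbracket = \llbracket N\rrbracket$, is a probabilistic applicative bisimulation. Consequently, any two closed terms of the same type with equal semantics are applicatively bisimilar. -/

import Mathlib

open scoped ENNReal

/-- Probability of jumping from `s` with label `l` into the set `X`. -/
noncomputable def pSet {S L : Type*} (P : S → L → S → ℝ≥0∞) (s : S) (l : L) (X : Set S) : ℝ≥0∞ :=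
  ∑' x : X, P s l x

/-- Relational image `R(X) = {y | ∃ x ∈ X, x R y}`. -/
def rimg {S : Type*} (R : S → S → Prop) (X : Set S) : Set S := {y | ∃ x ∈ X, R x y}

/-- `E` is an equivalence class of `R`. -/
def EqClass {S : Type*} (R : S → S → Prop) (E : Set S) : Prop := ∃ z, E = {y | R z y}

/-- A labelled Markov chain structure on a transition probability matrix. -/
structure IsLMC {S L : Type*} (P : S → L → S → ℝ≥0∞) : Prop where
  le_one : ∀ s l t, P s l t ≤ 1
  sum_le_one : ∀ s l, (∑' t, P s l t) ≤ 1

/-- A probabilistic simulation: a preorder `R` such that `s R t` implies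
`P(s,l,X) ≤ P(t,l,R(X))`. -/
def IsProbSim {S L : Type*} (P : S → L → S → ℝ≥0∞) (R : S → S → Prop) : Prop :=
  Reflexive R ∧ Transitive R ∧
    ∀ s t, R s t → ∀ (l : L) (X : Set S), pSet P s l X ≤ pSet P t l (rimg R X)

/-- A probabilistic bisimulation: an equivalence relation `R` such that `s R t` implies
`P(s,l,E) = P(t,l,E)` for every `R`-equivalence class `E`. -/
def IsProbBisim {S L : Type*} (P : S → L → S → ℝ≥0∞) (R : S → S → Prop) : Prop :=
  Equivalence R ∧
    ∀ s t, R s t → ∀ (l : L) (E : Set S), EqClass R E → pSet P s l E = pSet P t l E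

/-- Similarity: the union of all probabilistic simulations. -/
def ProbSimilar {S L : Type*} (P : S → L → S → ℝ≥0∞) (s t : S) : Prop :=
  ∃ R, IsProbSim P R ∧ R s t

/-- Bisimilarity: the union of all probabilistic bisimulations. -/
def Bisimilar {S L : Type*} (P : S → L → S → ℝ≥0∞) (s t : S) : Prop :=
  ∃ R, IsProbBisim P R ∧ R s t
open scoped ENNReal Classical

namespace PCFL

/-- Types of PCFL⊕. -/
inductive Ty : Type
  | bool | int
  | arrow (a b : Ty)
  | prod (a b : Ty)
  | list (a : Ty)
deriving DecidableEq

/-- Binary arithmetic operators (including `+`, `≤`, `=`). -/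
inductive Op : Type | plus | le | eq
deriving DecidableEq

/-- Result type of an operator. -/
def Op.resTy : Op → Ty
  | .plus => .int
  | .le => .bool
  | .eq => .bool

/-- Terms of PCFL⊕, in de Bruijn representation. -/
inductive Tm : Type
  | var (n : ℕ)
  | cnat (n : ℕ)
  | cbool (b : Bool)
  | nil
  | pair (M N : Tm)
  | cons (M N : Tm)
  | lam (M : Tm)
  | fixp (M : Tm)
  | choice (M N : Tm)
  | ite (L M N : Tm)
  | bop (o : Op) (M N : Tm)
  | fst (M : Tm)
  | snd (M : Tm)
  | caseL (L M N : Tm)  -- in `N` : var 1 is the head, var 0 the tail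
  | app (M N : Tm)
deriving DecidableEq

/-- Semantics of an operator, as a value. -/
def Op.den : Op → ℕ → ℕ → Tm
  | .plus, n, m => .cnat (n + m)
  | .le, n, m => .cbool (decide (n ≤ m))
  | .eq, n, m => .cbool (decide (n = m))

/-- Substitution of the closed term `s` for the variable `k`. -/
def subst : Tm → ℕ → Tm → Tm
  | .var n, k, s => if n = k then s else if k < n then .var (n - 1) else .var n
  | .cnat n, _, _ => .cnat n
  | .cbool b, _, _ => .cbool b
  | .nil, _, _ => .nil
  | .pair M N, k, s => .pair (subst M k s) (subst N k s)
  | .cons M N, k, s => .cons (subst M k s) (subst N k s)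
  | .lam M, k, s => .lam (subst M (k + 1) s)
  | .fixp M, k, s => .fixp (subst M (k + 1) s)
  | .choice M N, k, s => .choice (subst M k s) (subst N k s)
  | .ite L M N, k, s => .ite (subst L k s) (subst M k s) (subst N k s)
  | .bop o M N, k, s => .bop o (subst M k s) (subst N k s)
  | .fst M, k, s => .fst (subst M k s)
  | .snd M, k, s => .snd (subst M k s)
  | .caseL L M N, k, s => .caseL (subst L k s) (subst M k s) (subst N (k + 2) s)
  | .app M N, k, s => .app (subst M k s) (subst N k s)

/-- Values of PCFL⊕. -/
inductive IsValue : Tm → Prop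
  | cnat (n) : IsValue (.cnat n)
  | cbool (b) : IsValue (.cbool b)
  | nil : IsValue .nil
  | lam (M) : IsValue (.lam M)
  | fixp (M) : IsValue (.fixp M)
  | cons (M N) : IsValue (.cons M N)
  | pair (M N) : IsValue (.pair M N)

/-- The Dirac distribution on a term. -/
noncomputable def dirac (V : Tm) : Tm → ℝ≥0∞ := fun W => if W = V then 1 else 0

/-- Big-step approximation semantics `M ⇓ 𝒟` of PCFL⊕ (call-by-value). -/
inductive Eval : Tm → (Tm → ℝ≥0∞) → Prop
  | empty (M) : Eval M 0
  | val {V} : IsValue V → Eval V (dirac V)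
  | bop {M N : Tm} {D E : Tm → ℝ≥0∞} (o : Op) : Eval M D → Eval N E →
      Eval (.bop o M N)
        (fun b => ∑' (n : ℕ) (m : ℕ), D (.cnat n) * E (.cnat m) * dirac (o.den n m) b)
  | app {M N : Tm} {K F : Tm → ℝ≥0∞} {E G : Tm → Tm → Tm → ℝ≥0∞} :
      Eval M K → Eval N F →
      (∀ P v, K (.lam P) ≠ 0 → F v ≠ 0 → Eval (subst P 0 v) (E P v)) →
      (∀ Q v, K (.fixp Q) ≠ 0 → F v ≠ 0 →
        Eval (.app (subst Q 0 (.fixp Q)) v) (G Q v)) →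
      Eval (.app M N)
        (fun b => ∑' v, F v *
          ((∑' P, K (.lam P) * E P v b) + ∑' Q, K (.fixp Q) * G Q v b))
  | ite {L M₁ M₂ : Tm} {D E₁ E₂ : Tm → ℝ≥0∞} :
      Eval L D → Eval M₁ E₁ → Eval M₂ E₂ →
      Eval (.ite L M₁ M₂)
        (fun b => D (.cbool true) * E₁ b + D (.cbool false) * E₂ b)
  | caseL {L M₁ M₂ : Tm} {D E : Tm → ℝ≥0∞} {G K : Tm → Tm → Tm → ℝ≥0∞}
      {F : Tm → Tm → Tm → ℝ≥0∞} :
      Eval L D → Eval M₁ E →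
      (∀ H T, D (.cons H T) ≠ 0 → Eval H (G H T)) →
      (∀ H T, D (.cons H T) ≠ 0 → Eval T (K H T)) →
      (∀ H T V W, D (.cons H T) ≠ 0 → G H T V ≠ 0 → K H T W ≠ 0 →
        Eval (subst (subst M₂ 1 V) 0 W) (F V W)) →
      Eval (.caseL L M₁ M₂)
        (fun b => D .nil * E b +
          ∑' H, ∑' T, ∑' V, ∑' W, D (.cons H T) * G H T V * K H T W * F V W b)
  | fst {M : Tm} {D : Tm → ℝ≥0∞} {E : Tm → Tm → Tm → ℝ≥0∞} : Eval M D →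
      (∀ P N, D (.pair P N) ≠ 0 → Eval P (E P N)) →
      Eval (.fst M) (fun b => ∑' P, ∑' N, D (.pair P N) * E P N b)
  | snd {M : Tm} {D : Tm → ℝ≥0∞} {E : Tm → Tm → Tm → ℝ≥0∞} : Eval M D →
      (∀ P N, D (.pair P N) ≠ 0 → Eval N (E P N)) →
      Eval (.snd M) (fun b => ∑' P, ∑' N, D (.pair P N) * E P N b)
  | choice {M₁ M₂ : Tm} {D₁ D₂ : Tm → ℝ≥0∞} : Eval M₁ D₁ → Eval M₂ D₂ →
      Eval (.choice M₁ M₂) (fun b => D₁ b / 2 + D₂ b / 2)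

/-- The big-step semantics `⟦M⟧`: the (pointwise) supremum of all approximations. -/
noncomputable def sem (M : Tm) : Tm → ℝ≥0∞ :=
  fun V => ⨆ (D : Tm → ℝ≥0∞) (_ : Eval M D), D V

/-- Typing judgements of PCFL⊕ (Figure 1), de Bruijn style. -/
inductive HasTy : List Ty → Tm → Ty → Prop
  | var {Γ n σ} : Γ[n]? = some σ → HasTy Γ (.var n) σ
  | cnat {Γ n} : HasTy Γ (.cnat n) .int
  | cbool {Γ b} : HasTy Γ (.cbool b) .bool
  | nil {Γ σ} : HasTy Γ .nil (.list σ)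
  | pair {Γ M N σ τ} : HasTy Γ M σ → HasTy Γ N τ → HasTy Γ (.pair M N) (.prod σ τ)
  | cons {Γ M N σ} : HasTy Γ M σ → HasTy Γ N (.list σ) → HasTy Γ (.cons M N) (.list σ)
  | lam {Γ M σ τ} : HasTy (σ :: Γ) M τ → HasTy Γ (.lam M) (.arrow σ τ)
  | fixp {Γ M σ τ} : HasTy (.arrow σ τ :: Γ) M (.arrow σ τ) →
      HasTy Γ (.fixp M) (.arrow σ τ)
  | choice {Γ M N σ} : HasTy Γ M σ → HasTy Γ N σ → HasTy Γ (.choice M N) σ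
  | ite {Γ L M N σ} : HasTy Γ L .bool → HasTy Γ M σ → HasTy Γ N σ →
      HasTy Γ (.ite L M N) σ
  | bop {Γ M N} (o : Op) : HasTy Γ M .int → HasTy Γ N .int →
      HasTy Γ (.bop o M N) o.resTy
  | fst {Γ M σ τ} : HasTy Γ M (.prod σ τ) → HasTy Γ (.fst M) σ
  | snd {Γ M σ τ} : HasTy Γ M (.prod σ τ) → HasTy Γ (.snd M) τ
  | caseL {Γ L M N σ τ} : HasTy Γ L (.list σ) → HasTy Γ M τ →
      HasTy (.list σ :: σ :: Γ) N τ → HasTy Γ (.caseL L M N) τ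
  | app {Γ M N σ τ} : HasTy Γ M (.arrow σ τ) → HasTy Γ N σ → HasTy Γ (.app M N) τ

end PCFL

namespace PCFL

/-- Labels of the labelled Markov chain `𝓜⊕`. -/
inductive Lbl : Type
  | val (V : Tm)      -- passing an argument value
  | ty (σ : Ty)       -- exposing the type
  | nat (n : ℕ)
  | bool (b : Bool)
  | nilA | hd | tl
  | fstA | sndA
  | eval

/-- States of `𝓜⊕`: terms `(M,σ)` and distinguished values `(V̂,σ)`. -/
inductive St : Type
  | tm (M : Tm) (σ : Ty)
  | vl (V : Tm) (σ : Ty)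

/-- The deterministic (probability-1) transitions of `𝓜⊕`. -/
inductive Step : St → Lbl → St → Prop
  | tyTm (M σ) : Step (.tm M σ) (.ty σ) (.tm M σ)
  | tyVl (V σ) : Step (.vl V σ) (.ty σ) (.vl V σ)
  | argLam {W : Tm} (M : Tm) (τ θ : Ty) : IsValue W → HasTy [] W τ →
      Step (.vl (.lam M) (.arrow τ θ)) (.val W) (.tm (subst M 0 W) θ)
  | argFix {W : Tm} (M : Tm) (τ θ : Ty) : IsValue W → HasTy [] W τ →
      Step (.vl (.fixp M) (.arrow τ θ)) (.val W)
        (.tm (.app (subst M 0 (.fixp M)) W) θ)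
  | fst (M N : Tm) (τ θ : Ty) : Step (.vl (.pair M N) (.prod τ θ)) .fstA (.tm M τ)
  | snd (M N : Tm) (τ θ : Ty) : Step (.vl (.pair M N) (.prod τ θ)) .sndA (.tm N θ)
  | nat (k : ℕ) : Step (.vl (.cnat k) .int) (.nat k) (.vl (.cnat k) .int)
  | bool (b : Bool) : Step (.vl (.cbool b) .bool) (.bool b) (.vl (.cbool b) .bool)
  | nil (τ : Ty) : Step (.vl .nil (.list τ)) .nilA (.vl .nil (.list τ))
  | hd (M N : Tm) (τ : Ty) : Step (.vl (.cons M N) (.list τ)) .hd (.tm M τ)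
  | tl (M N : Tm) (τ : Ty) : Step (.vl (.cons M N) (.list τ)) .tl (.tm N (.list τ))

/-- The transition probability matrix `𝓟⊕` of `𝓜⊕`: the action `eval` goes from
`(M,σ)` to `(V̂,σ)` with probability `⟦M⟧(V)`; all other transitions are the
deterministic ones given by `Step`. -/
noncomputable def Pp (s : St) (l : Lbl) (t : St) : ℝ≥0∞ :=
  match s, l, t with
  | .tm M σ, .eval, .vl V ρ => if ρ = σ ∧ IsValue V then sem M V else 0
  | s, l, t => if Step s l t then 1 else 0

end PCFL

namespace PCFL

/-- The relation relating states of equal type whose underlying closed terms have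
identical semantics (and each state to itself). -/
def Req : St → St → Prop := fun s t =>
  s = t ∨ ∃ σ M N, s = .tm M σ ∧ t = .tm N σ ∧
    HasTy [] M σ ∧ HasTy [] N σ ∧ sem M = sem N

end PCFL

/-!
From a term state `(M, σ)` there are only two kinds of transitions: the `ty σ` self-loop of
probability one, and `eval`, which reaches the value state `(V̂, σ)` with probability `⟦M⟧(V)`.
So two term states of the same type with the same semantics have literally the same `eval`
distribution, and their self-loops land in the same `Req`-class because the states are related.
-/

lemma tsum_subtype_ite_eq {S α : Type*} [AddCommMonoid α] [TopologicalSpace α]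
    (X : Set S) (a : S) (c : α) :
    (∑' x : X, if (x : S) = a then c else 0) = if a ∈ X then c else 0 := by
  by_cases ha : a ∈ X
  · rw [if_pos ha, tsum_eq_single ⟨a, ha⟩ fun b hb => if_neg fun h => hb (Subtype.ext h),
      if_pos rfl]
  · rw [if_neg ha]
    exact (tsum_congr fun (b : X) => if_neg fun (h : (b : S) = a) => ha (h ▸ b.2)).trans tsum_zero

namespace PCFL

lemma step_tm_iff {M : Tm} {σ : Ty} {l : Lbl} {x : St} :
    Step (.tm M σ) l x ↔ l = .ty σ ∧ x = .tm M σ := by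
  constructor
  · rintro ⟨⟩; exact ⟨rfl, rfl⟩
  · rintro ⟨rfl, rfl⟩; exact .tyTm M σ

lemma Pp_tm_of_ne_eval {M : Tm} {σ : Ty} {l : Lbl} (hl : l ≠ .eval) (x : St) :
    Pp (.tm M σ) l x = if l = .ty σ ∧ x = .tm M σ then 1 else 0 := by
  have : Pp (.tm M σ) l x = if Step (.tm M σ) l x then 1 else 0 := by
    cases l <;> cases x <;> first | rfl | exact absurd rfl hl
  simp only [this, step_tm_iff]

lemma Pp_tm_eval_congr {M N : Tm} (σ : Ty) (h : sem M = sem N) :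
    Pp (.tm M σ) .eval = Pp (.tm N σ) .eval := by
  funext x
  cases x <;> simp [Pp, h, step_tm_iff]

lemma pSet_tm_of_ne_eval {M : Tm} {σ : Ty} {l : Lbl} (hl : l ≠ .eval) (X : Set St) :
    pSet Pp (.tm M σ) l X = if l = .ty σ ∧ .tm M σ ∈ X then 1 else 0 := by
  simp only [pSet, Pp_tm_of_ne_eval hl, ite_and]
  by_cases h : l = .ty σ
  · simp only [h, if_true, tsum_subtype_ite_eq]
  · simp only [h, if_false, tsum_zero]

lemma equivalence_Req : Equivalence Req where
  refl _ := .inl rfl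
  symm := by
    rintro s t (rfl | ⟨σ, M, N, rfl, rfl, hM, hN, hMN⟩)
    · exact .inl rfl
    · exact .inr ⟨σ, N, M, rfl, rfl, hN, hM, hMN.symm⟩
  trans := by
    rintro s t u (rfl | ⟨σ, M, N, rfl, rfl, hM, hN, hMN⟩) htu
    · exact htu
    rcases htu with rfl | ⟨σ', N', P, hN', rfl, -, hP, hNP⟩
    · exact .inr ⟨σ, M, N, rfl, rfl, hM, hN, hMN⟩
    · obtain ⟨rfl, rfl⟩ := St.tm.inj hN'
      exact .inr ⟨σ, M, P, rfl, rfl, hM, hP, hMN.trans hNP⟩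

theorem isProbBisim_Req : IsProbBisim Pp Req := by
  refine ⟨equivalence_Req, ?_⟩
  rintro s t hst l E ⟨z, rfl⟩
  rcases id hst with rfl | ⟨σ, M, N, rfl, rfl, -, -, hMN⟩
  · rfl
  by_cases hl : l = .eval
  · subst hl
    simp only [pSet, Pp_tm_eval_congr σ hMN]
  · have hmem : Req z (.tm M σ) ↔ Req z (.tm N σ) :=
      ⟨fun h => equivalence_Req.trans h hst,
        fun h => equivalence_Req.trans h (equivalence_Req.symm hst)⟩
    simp only [pSet_tm_of_ne_eval hl, Set.mem_ofPred_eq, hmem]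

/-- in `𝓜⊕`, the relation identifying closed terms of the same type
with identical semantics is a probabilistic applicative bisimulation; consequently,
any two closed terms of the same type with equal semantics are bisimilar. -/
theorem stmt11 :
    IsProbBisim Pp Req ∧
    ∀ (σ : Ty) (M N : Tm), HasTy [] M σ → HasTy [] N σ → sem M = sem N →
      Bisimilar Pp (St.tm M σ) (St.tm N σ) :=
  ⟨isProbBisim_Req, fun σ M N hM hN hMN =>
    ⟨Req, isProbBisim_Req, .inr ⟨σ, M, N, rfl, rfl, hM, hN, hMN⟩⟩⟩

end PCFL
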